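/- Let λ, μ > 0 and let B be a real 2×2 matrix with eigenvalues −μ and λ. Let v₁ ∈ ℝ² be a unit vector with B v₁ = −μ v₁, and let v₂' ∈ (ℝ²)* be a left eigenvector with v₂' B = λ v₂', so that v₂' v₁ = 0. Let p ∈ ℕ, r > 0, and for x ∈ ℝ² let a(x) = (1/3)·2^{−2p}·diag(x₁², x₂²). Set x_s = r e^{−μs} v₁. Then ∫₀^∞ e^{−2λs} v₂' a(x_s) (v₂')ᵀ ds = (1/(3(λ+μ))) · 2^{−2p} · r² · (v₁,₁ v₂,₁')², where v₁,₁ is the first component of v₁ and v₂,₁' is the first component of v₂'. -/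

import Mathlib

/-! Left and right eigenvectors for the distinct eigenvalues `λ` and `-μ` are orthogonal, which in
dimension two forces `(v₁,₂ v₂,₂')² = (v₁,₁ v₂,₁')²`. Along `x_s = r e^{-μs} v₁` the integrand is
therefore `(2/3) 2^{-2p} r² (v₁,₁ v₂,₁')² e^{-2(λ+μ)s}`, whose integral over `(0, ∞)` is elementary. -/

open Matrix MeasureTheory

namespace Matrix

theorem dotProduct_eq_zero_of_vecMul_eq_smul_of_mulVec_eq_smul {n R : Type*} [Fintype n]
    [CommRing R] [NoZeroDivisors R] {B : Matrix n n R} {v w : n → R} {α β : R}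
    (hw : w ᵥ* B = α • w) (hv : B *ᵥ v = β • v) (hαβ : α ≠ β) : w ⬝ᵥ v = 0 := by
  have h : α * (w ⬝ᵥ v) = β * (w ⬝ᵥ v) := by
    rw [← smul_eq_mul, ← smul_dotProduct, ← hw, ← dotProduct_mulVec, hv, dotProduct_smul,
      smul_eq_mul]
  by_contra hwv
  exact hαβ (mul_right_cancel₀ hwv h)

theorem dotProduct_diagonal_mulVec {n R : Type*} [Fintype n] [DecidableEq n] [CommSemiring R]
    (d w : n → R) : w ⬝ᵥ diagonal d *ᵥ w = ∑ i, d i * w i ^ 2 := by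
  simp only [dotProduct, mulVec_diagonal]
  exact Finset.sum_congr rfl fun i _ => by ring

end Matrix

theorem sq_mul_eq_sq_mul_of_dotProduct_eq_zero {R : Type*} [CommRing R] {v w : Fin 2 → R}
    (h : w ⬝ᵥ v = 0) : (v 1 * w 1) ^ 2 = (v 0 * w 0) ^ 2 := by
  rw [dotProduct, Fin.sum_univ_two] at h
  linear_combination (v 1 * w 1 - v 0 * w 0) * h

theorem stmt7_general (lam mu : ℝ) (hlam : 0 < lam) (hmu : 0 < mu)
    (B : Matrix (Fin 2) (Fin 2) ℝ)
    (v1 : Fin 2 → ℝ)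
    (hv1 : B.mulVec v1 = (-mu) • v1)
    (v2' : Fin 2 → ℝ) (hv2' : Matrix.vecMul v2' B = lam • v2')
    (p : ℕ) (r : ℝ)
    (a : (Fin 2 → ℝ) → Matrix (Fin 2) (Fin 2) ℝ)
    (ha : ∀ v, a v = ((1 : ℝ) / 3 * 2 ^ (-(2 * p : ℤ))) • Matrix.diagonal (fun i => v i ^ 2))
    (x : ℝ → Fin 2 → ℝ) (hx : ∀ s, x s = (r * Real.exp (-mu * s)) • v1) :
    ∫ s in Set.Ioi (0 : ℝ), Real.exp (-2 * lam * s) * (v2' ⬝ᵥ (a (x s)).mulVec v2') =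
      1 / (3 * (lam + mu)) * 2 ^ (-(2 * p : ℤ)) * r ^ 2 * (v1 0 * v2' 0) ^ 2 := by
  have hsq : (v1 1 * v2' 1) ^ 2 = (v1 0 * v2' 0) ^ 2 :=
    sq_mul_eq_sq_mul_of_dotProduct_eq_zero <|
      dotProduct_eq_zero_of_vecMul_eq_smul_of_mulVec_eq_smul hv2' hv1 (by linarith)
  set c : ℝ := 2 / 3 * 2 ^ (-(2 * p : ℤ)) * r ^ 2 * (v1 0 * v2' 0) ^ 2
  have hintegrand : ∀ s, Real.exp (-2 * lam * s) * (v2' ⬝ᵥ (a (x s)).mulVec v2') =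
      c * Real.exp (-(2 * (lam + mu)) * s) := fun s => by
    have hexp : Real.exp (-(2 * (lam + mu)) * s) =
        Real.exp (-2 * lam * s) * Real.exp (-mu * s) ^ 2 := by
      rw [sq, ← Real.exp_add, ← Real.exp_add]; ring_nf
    rw [ha, hx, smul_mulVec, dotProduct_smul, dotProduct_diagonal_mulVec, Fin.sum_univ_two, hexp]
    simp only [Pi.smul_apply, smul_eq_mul, c]
    linear_combination (1 / 3 * 2 ^ (-(2 * p : ℤ)) * r ^ 2 * Real.exp (-2 * lam * s) *
      Real.exp (-mu * s) ^ 2 : ℝ) * hsq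
  have hrate : -(2 * (lam + mu)) < 0 := by linarith
  rw [setIntegral_congr_fun measurableSet_Ioi fun s _ => hintegrand s, integral_const_mul,
    integral_exp_mul_Ioi hrate, mul_zero, Real.exp_zero]
  field_simp
  ring

theorem stmt7 (lam mu : ℝ) (hlam : 0 < lam) (hmu : 0 < mu)
    (B : Matrix (Fin 2) (Fin 2) ℝ)
    (v1 : Fin 2 → ℝ) (hv1unit : v1 0 ^ 2 + v1 1 ^ 2 = 1)
    (hv1 : B.mulVec v1 = (-mu) • v1)
    (v2' : Fin 2 → ℝ) (hv2' : Matrix.vecMul v2' B = lam • v2')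
    (p : ℕ) (r : ℝ) (hr : 0 < r)
    (a : (Fin 2 → ℝ) → Matrix (Fin 2) (Fin 2) ℝ)
    (ha : ∀ v, a v = ((1 : ℝ) / 3 * 2 ^ (-(2 * p : ℤ))) • Matrix.diagonal (fun i => v i ^ 2))
    (x : ℝ → Fin 2 → ℝ) (hx : ∀ s, x s = (r * Real.exp (-mu * s)) • v1) :
    ∫ s in Set.Ioi (0 : ℝ), Real.exp (-2 * lam * s) * (v2' ⬝ᵥ (a (x s)).mulVec v2') =
      1 / (3 * (lam + mu)) * 2 ^ (-(2 * p : ℤ)) * r ^ 2 * (v1 0 * v2' 0) ^ 2 :=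
  stmt7_general lam mu hlam hmu B v1 hv1 v2' hv2' p r a ha x hx
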